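/- For every β ∈ (0, 1] and all real numbers a, b, the scalar signed power map satisfies |sign(a)·|a|^β − sign(b)·|b|^β| ≤ 2^{1−β}·|a − b|^β, where sign(0) = 0. -/
import Mathlib

private lemma sp_eq_of_nonneg {β : ℝ} (hβ0 : 0 < β) {a : ℝ} (ha : 0 ≤ a) :
    Real.sign a * |a| ^ β = a ^ β := by
  rcases ha.lt_or_eq with h | h
  · rw [Real.sign_of_pos h, abs_of_pos h, one_mul]
  · rw [← h, Real.sign_zero, zero_mul, Real.zero_rpow hβ0.ne']

private lemma sp_subadd {β : ℝ} (hβ0 : 0 < β) (hβ1 : β ≤ 1) {x y : ℝ}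
    (hx : 0 ≤ x) (hy : 0 ≤ y) : (x + y) ^ β ≤ x ^ β + y ^ β := by
  lift x to NNReal using hx
  lift y to NNReal using hy
  have := NNReal.rpow_add_le_add_rpow x y hβ0.le hβ1
  exact_mod_cast this

private lemma sp_sub_rpow {β : ℝ} (hβ0 : 0 < β) (hβ1 : β ≤ 1) {x y : ℝ}
    (hy : 0 ≤ y) (hxy : y ≤ x) : x ^ β - y ^ β ≤ (x - y) ^ β := by
  have h := sp_subadd hβ0 hβ1 (sub_nonneg.2 hxy) hy
  rw [sub_add_cancel] at h
  linarith

private lemma sp_concave {β : ℝ} (hβ0 : 0 < β) (hβ1 : β ≤ 1) {x y : ℝ}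
    (hx : 0 ≤ x) (hy : 0 ≤ y) :
    x ^ β + y ^ β ≤ (2 : ℝ) ^ (1 - β) * (x + y) ^ β := by
  have hc := (Real.concaveOn_rpow hβ0.le hβ1).2 (Set.mem_Ici.2 hx) (Set.mem_Ici.2 hy)
    (by norm_num : (0:ℝ) ≤ 1/2) (by norm_num : (0:ℝ) ≤ 1/2) (by norm_num)
  -- hc : 1/2 * x^β + 1/2 * y^β ≤ (1/2*x + 1/2*y)^β
  simp only [smul_eq_mul] at hc
  have h2 : ((1:ℝ)/2 * x + 1/2 * y) ^ β = (1/2 : ℝ) ^ β * (x + y) ^ β := by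
    rw [← Real.mul_rpow (by norm_num) (by positivity)]
    ring_nf
  rw [h2] at hc
  have h3 : (2 : ℝ) ^ (1 - β) = 2 * (1/2 : ℝ) ^ β := by
    rw [Real.rpow_sub (by norm_num), Real.rpow_one, one_div,
      Real.inv_rpow (by norm_num), div_eq_mul_inv]
  rw [h3]
  nlinarith [Real.rpow_nonneg (add_nonneg hx hy) β, (by positivity : (0:ℝ) < (1/2:ℝ) ^ β)]

private lemma sp_one_le {β : ℝ} (hβ1 : β ≤ 1) : (1:ℝ) ≤ (2 : ℝ) ^ (1 - β) :=
  Real.one_le_rpow (by norm_num) (by linarith)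

private lemma sp_key {β : ℝ} (hβ0 : 0 < β) (hβ1 : β ≤ 1) {a b : ℝ} (hba : b ≤ a) :
    |Real.sign a * |a| ^ β - Real.sign b * |b| ^ β| ≤ (2 : ℝ) ^ (1 - β) * |a - b| ^ β := by
  have habs : |a - b| = a - b := abs_of_nonneg (by linarith)
  rw [habs]
  have hpow_nonneg : (0:ℝ) ≤ (a - b) ^ β := Real.rpow_nonneg (by linarith) β
  rcases le_or_gt 0 b with hb | hb
  · -- 0 ≤ b ≤ a
    have ha : 0 ≤ a := le_trans hb hba
    rw [sp_eq_of_nonneg hβ0 ha, sp_eq_of_nonneg hβ0 hb]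
    have h1 : a ^ β - b ^ β ≤ (a - b) ^ β := sp_sub_rpow hβ0 hβ1 hb hba
    have h2 : b ^ β ≤ a ^ β := Real.rpow_le_rpow hb hba hβ0.le
    rw [abs_of_nonneg (by linarith)]
    calc a ^ β - b ^ β ≤ (a - b) ^ β := h1
      _ ≤ (2:ℝ) ^ (1 - β) * (a - b) ^ β := le_mul_of_one_le_left hpow_nonneg (sp_one_le hβ1)
  · rcases le_or_gt 0 a with ha | ha
    · -- b < 0 ≤ a
      have hsb : Real.sign b * |b| ^ β = -((-b) ^ β) := by
        rw [Real.sign_of_neg hb, abs_of_neg hb, neg_one_mul]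
      rw [sp_eq_of_nonneg hβ0 ha, hsb, sub_neg_eq_add]
      have hnb : (0:ℝ) ≤ -b := by linarith
      have h := sp_concave hβ0 hβ1 ha hnb
      rw [abs_of_nonneg (add_nonneg (Real.rpow_nonneg ha β) (Real.rpow_nonneg hnb β))]
      calc a ^ β + (-b) ^ β ≤ (2:ℝ) ^ (1-β) * (a + -b) ^ β := h
        _ = (2:ℝ) ^ (1-β) * (a - b) ^ β := by rw [← sub_eq_add_neg]
    · -- b ≤ a < 0 : reduce via negation
      have hsneg : ∀ x : ℝ, x < 0 → Real.sign x * |x| ^ β = -((-x) ^ β) := fun x hx => by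
        rw [Real.sign_of_neg hx, abs_of_neg hx, neg_one_mul]
      rw [hsneg a ha, hsneg b hb]
      have h0a : 0 ≤ -a := by linarith
      have hab : -a ≤ -b := by linarith
      have h1 : (-b) ^ β - (-a) ^ β ≤ (-b - -a) ^ β := sp_sub_rpow hβ0 hβ1 h0a hab
      have h2 : (-a) ^ β ≤ (-b) ^ β := Real.rpow_le_rpow h0a hab hβ0.le
      have heq : -b - -a = a - b := by ring
      rw [heq] at h1
      rw [show -(-a) ^ β - -(-b) ^ β = (-b)^β - (-a)^β by ring]
      rw [abs_of_nonneg (by linarith)]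
      calc (-b) ^ β - (-a) ^ β ≤ (a - b) ^ β := h1
        _ ≤ (2:ℝ) ^ (1 - β) * (a - b) ^ β := le_mul_of_one_le_left hpow_nonneg (sp_one_le hβ1)

/-- **Scalar Hölder bound for the signed power map.**
For every `β ∈ (0,1]` and all real `a, b`:
`|sign(a)·|a|^β − sign(b)·|b|^β| ≤ 2^(1−β)·|a − b|^β`, with `sign(0) = 0`. -/
theorem signed_power_scalar_holder (β : ℝ) (hβ0 : 0 < β) (hβ1 : β ≤ 1) (a b : ℝ) :
    |Real.sign a * |a| ^ β - Real.sign b * |b| ^ β| ≤ (2 : ℝ) ^ (1 - β) * |a - b| ^ β := by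
  rcases le_total b a with h | h
  · exact sp_key hβ0 hβ1 h
  · rw [abs_sub_comm, abs_sub_comm a b]
    exact sp_key hβ0 hβ1 h
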